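/- arXiv:1804.09014 — 3 statements merged into one kernel-verified Lean document; each statement's English description precedes it below -/
import Mathlib

section
/- Fix α ∈ (0,1). Define M_1 = log(p_1(X_1)/p_0(X_1)) and M_n = log(p_1(X_n)/p_0(X_n)) + max(0, M_{n−1}) for n ≥ 2, and let τ_ml^α = inf{n ≥ 1 : M_n ≥ log(1/α)} (the CUSUM stopping time). Assume μ_0 = ∫ log(p_0/p_1) p_0 and μ_1 = ∫ log(p_1/p_0) p_1 are finite and strictly positive. Then sup_{θ ∈ ℤ^+} P_θ(τ_ml^α < θ) = 1. -/
open MeasureTheory ProbabilityTheory Finset Filter Topology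
open scoped ENNReal

/-!
Under `p₀` the log-likelihood ratio `L = log (p₁ / p₀)` exceeds some `δ > 0` with probability
`q > 0`; otherwise `L ≤ 0` almost everywhere and `∫ L p₁ ≤ 0`. The CUSUM statistic dominates every
partial sum of the increments ending at time `n`, so it reaches `log (1 / α)` at the end of any
block of `m ≥ log (1 / α) / δ` consecutive pre-change increments `≥ δ`. For `θ = K m + 1` the `K`
disjoint blocks before `θ` are independent, so a false alarm occurs with probability at least
`1 - (1 - q ^ m) ^ K`, which tends to `1` as `K → ∞`.
-/

section CUSUM

variable {Z M : ℕ → ℝ}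

theorem sum_Ioc_le_cusum (hM1 : M 1 = Z 1)
    (hMrec : ∀ n, 2 ≤ n → M n = Z n + max 0 (M (n - 1))) {a n : ℕ} (han : a < n) :
    ∑ i ∈ Ioc a n, Z i ≤ M n := by
  induction n with
  | zero => omega
  | succ n ih =>
    rw [sum_Ioc_succ_top (by omega)]
    rcases Nat.eq_zero_or_pos n with rfl | hn
    · simp [hM1]
    · have hprev : ∑ i ∈ Ioc a n, Z i ≤ max 0 (M n) := by
        rcases (Nat.lt_succ_iff.1 han).eq_or_lt with rfl | h
        · simp
        · exact (ih h).trans (le_max_right _ _)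
      rw [hMrec (n + 1) (by omega), Nat.add_sub_cancel]
      linarith

theorem le_cusum_of_forall_mem_Ioc_le (hM1 : M 1 = Z 1)
    (hMrec : ∀ n, 2 ≤ n → M n = Z n + max 0 (M (n - 1))) {a m : ℕ} (hm : 0 < m) {c δ : ℝ}
    (hc : c ≤ m * δ) (hZ : ∀ i ∈ Ioc a (a + m), δ ≤ Z i) : c ≤ M (a + m) :=
  calc c ≤ m * δ := hc
    _ = ∑ _i ∈ Ioc a (a + m), δ := by simp
    _ ≤ ∑ i ∈ Ioc a (a + m), Z i := sum_le_sum hZ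
    _ ≤ M (a + m) := sum_Ioc_le_cusum hM1 hMrec (by omega)

end CUSUM

theorem measure_biInter_range_eq_prod_of_iIndep {ι Ω : Type*} {mΩ : MeasurableSpace Ω}
    {μ : Measure Ω} {m : ι → MeasurableSpace Ω} (h_le : ∀ i, m i ≤ mΩ) (h_ind : iIndep m μ)
    {I : ℕ → Set ι} (hI : Pairwise (Function.onFun Disjoint I)) {E : ℕ → Set Ω}
    (hE : ∀ j, MeasurableSet[⨆ i ∈ I j, m i] (E j)) (K : ℕ) :
    μ (⋂ j ∈ range K, E j) = ∏ j ∈ range K, μ (E j) := by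
  have := h_ind.isProbabilityMeasure
  induction K with
  | zero => simp
  | succ K ih =>
    have h_indep : Indep (⨆ i ∈ I K, m i) (⨆ i ∈ ⋃ j ∈ range K, I j, m i) μ :=
      indep_iSup_of_disjoint h_le h_ind <| Set.disjoint_iUnion₂_right.2 fun j hj =>
        hI (mem_range.1 hj).ne'
    have h_meas : MeasurableSet[⨆ i ∈ ⋃ j ∈ range K, I j, m i] (⋂ j ∈ range K, E j) :=
      MeasurableSet.biInter (Set.to_countable _) fun j hj =>
        (biSup_mono fun i hi => Set.mem_biUnion hj hi : (⨆ i ∈ I j, m i) ≤ _) _ (hE j)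
    rw [range_add_one, set_biInter_insert, prod_insert notMem_range_self,
      (Indep_iff _ _ μ).1 h_indep _ _ (hE K) h_meas, ih]

theorem measure_iUnion_block_preimage_eq {Ω β : Type*} {mΩ : MeasurableSpace Ω}
    [mβ : MeasurableSpace β] {μ : Measure Ω} {X : ℕ → Ω → β} (hXm : ∀ i, Measurable (X i))
    (hX : iIndepFun X μ) {S : Set β} (hS : MeasurableSet S) {q : ℝ≥0∞} {m K : ℕ}
    (hq : ∀ i ∈ Ioc 0 (K * m), μ (X i ⁻¹' S) = q) :
    μ (⋃ j ∈ range K, ⋂ i ∈ Ioc (j * m) (j * m + m), X i ⁻¹' S) = 1 - (1 - q ^ m) ^ K := by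
  have := hX.isProbabilityMeasure
  set B : ℕ → Set Ω := fun j => ⋂ i ∈ Ioc (j * m) (j * m + m), X i ⁻¹' S
  have hBc_meas (j : ℕ) :
      MeasurableSet[⨆ i ∈ (Ioc (j * m) (j * m + m) : Set ℕ), mβ.comap (X i)] (B j)ᶜ :=
    (MeasurableSet.biInter (Set.to_countable _) fun i hi =>
      le_iSup₂ (f := fun i (_ : i ∈ (Ioc (j * m) (j * m + m) : Set ℕ)) => mβ.comap (X i))
        i hi _ ⟨S, hS, rfl⟩).compl
  have hB_set_meas (j : ℕ) : MeasurableSet (B j) :=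
    Finset.measurableSet_biInter _ fun i _ => hXm i hS
  have hB (j : ℕ) (hj : j ∈ range K) : μ (B j) = q ^ m := by
    have hjK := mem_range.1 hj
    rw [hX.meas_biInter fun i _ => ⟨S, hS, rfl⟩, prod_congr rfl fun i hi => hq i ?_,
      prod_const, Nat.card_Ioc, Nat.add_sub_cancel_left]
    simp only [mem_Ioc] at hi ⊢
    constructor <;> nlinarith
  have hdisj :
      Pairwise (Function.onFun Disjoint fun j => (Ioc (j * m) (j * m + m) : Set ℕ)) := by
    intro j j' hjj'
    refine Set.disjoint_left.2 fun i hi hi' => ?_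
    simp only [coe_Ioc, Set.mem_Ioc] at hi hi'
    rcases hjj'.lt_or_gt with h | h <;> nlinarith
  calc μ (⋃ j ∈ range K, B j) = 1 - μ (⋃ j ∈ range K, B j)ᶜ := by
        rw [prob_compl_eq_one_sub (Finset.measurableSet_biUnion _ fun j _ => hB_set_meas j),
          ENNReal.sub_sub_cancel ENNReal.one_ne_top prob_le_one]
    _ = 1 - ∏ j ∈ range K, μ (B j)ᶜ := by
        rw [Set.compl_iUnion₂, measure_biInter_range_eq_prod_of_iIndep
          (fun i => (hXm i).comap_le) hX.iIndep hdisj hBc_meas]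
    _ = 1 - (1 - q ^ m) ^ K := by
        rw [prod_congr rfl fun j hj => by
          rw [prob_compl_eq_one_sub (hB_set_meas j), hB j hj],
          prod_const, card_range]

theorem withDensity_setOf_log_div_pos_ne_zero {α : Type*} [MeasurableSpace α] {μ : Measure α}
    {p₀ p₁ : α → ℝ} (hp₀ : Measurable p₀) (hp₀_nonneg : ∀ x, 0 ≤ p₀ x)
    (hp₁_nonneg : ∀ x, 0 ≤ p₁ x)
    (hpos : 0 < ∫ x, Real.log (p₁ x / p₀ x) * p₁ x ∂μ) :
    μ.withDensity (fun x => ENNReal.ofReal (p₀ x)) {x | 0 < Real.log (p₁ x / p₀ x)} ≠ 0 := by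
  intro h
  rw [withDensity_apply_eq_zero hp₀.ennreal_ofReal] at h
  -- `log (p₁ / 0) = 0`, so the log-likelihood ratio can only be positive where `p₀ ≠ 0`
  have h_pos_null : μ {x | 0 < Real.log (p₁ x / p₀ x)} = 0 := by
    refine measure_mono_null (Set.subset_inter (fun x hx => ?_) subset_rfl) h
    intro h0
    have : p₀ x = 0 := le_antisymm (ENNReal.ofReal_eq_zero.1 h0) (hp₀_nonneg x)
    simp [this] at hx
  have h_nonpos : ∀ᵐ x ∂μ, Real.log (p₁ x / p₀ x) * p₁ x ≤ 0 := by
    filter_upwards [measure_eq_zero_iff_ae_notMem.1 h_pos_null] with x hx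
    exact mul_nonpos_of_nonpos_of_nonneg (not_lt.1 hx) (hp₁_nonneg x)
  exact hpos.not_ge (integral_nonpos_of_ae h_nonpos)

theorem exists_pos_measure_setOf_le_ne_zero {α : Type*} [MeasurableSpace α] {μ : Measure α}
    {f : α → ℝ} (h : μ {x | 0 < f x} ≠ 0) : ∃ δ > 0, μ {x | δ ≤ f x} ≠ 0 := by
  have hcover : {x | 0 < f x} = ⋃ n : ℕ, {x | 1 / (n + 1 : ℝ) ≤ f x} := by
    ext x
    simp only [Set.mem_ofPred_eq, Set.mem_iUnion]
    exact ⟨fun hx => (exists_nat_one_div_lt hx).imp fun _ hn => hn.le,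
      fun ⟨n, hn⟩ => lt_of_lt_of_le (by positivity) hn⟩
  rw [hcover] at h
  obtain ⟨n, hn⟩ := exists_measure_pos_of_not_measure_iUnion_null h
  exact ⟨1 / (n + 1), by positivity, hn.ne'⟩

theorem tendsto_one_sub_pow_atTop_nhds_one {r : ℝ≥0∞} (hr : r < 1) :
    Tendsto (fun K : ℕ => 1 - r ^ K) atTop (𝓝 1) := by
  simpa using ENNReal.Tendsto.sub tendsto_const_nhds
    (ENNReal.tendsto_pow_atTop_nhds_zero_of_lt_one hr) (Or.inl ENNReal.one_ne_top)

theorem statement3_general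
    {Ω : Type*} [MeasurableSpace Ω]
    {d : ℕ} (p0 p1 : (Fin d → ℝ) → ℝ)
    (hp0m : Measurable p0) (hp1m : Measurable p1)
    (hp0nn : ∀ x, 0 ≤ p0 x) (hp1nn : ∀ x, 0 ≤ p1 x)
    (hμ1pos : 0 < ∫ x, Real.log (p1 x / p0 x) * p1 x)
    (X : ℕ → Ω → (Fin d → ℝ)) (hXm : ∀ i, Measurable (X i))
    (P : ℕ → Measure Ω)
    (hindep : ∀ θ, 1 ≤ θ → iIndepFun X (P θ))
    (hlaw0 : ∀ θ, 1 ≤ θ → ∀ i, 1 ≤ i → i < θ →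
      (P θ).map (X i) = volume.withDensity (fun x => ENNReal.ofReal (p0 x)))
    (α : ℝ) (hα : α ∈ Set.Ioo (0 : ℝ) 1)
    (M : ℕ → Ω → ℝ)
    (hM1 : ∀ ω, M 1 ω = Real.log (p1 (X 1 ω) / p0 (X 1 ω)))
    (hMrec : ∀ n, 2 ≤ n → ∀ ω,
      M n ω = Real.log (p1 (X n ω) / p0 (X n ω)) + max 0 (M (n - 1) ω))
    (τ : Ω → ℕ)
    (hτ : ∀ ω, τ ω = sInf {n | 1 ≤ n ∧ Real.log (1 / α) ≤ M n ω}) :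
    (⨆ θ : ℕ, ⨆ _ : 1 ≤ θ, P θ {ω | 1 ≤ τ ω ∧ τ ω < θ}) = 1 := by
  set c := Real.log (1 / α)
  set L : (Fin d → ℝ) → ℝ := fun x => Real.log (p1 x / p0 x)
  have hc : 0 < c := Real.log_pos (one_lt_one_div hα.1 hα.2)
  obtain ⟨δ, hδ, hq⟩ := exists_pos_measure_setOf_le_ne_zero
    (withDensity_setOf_log_div_pos_ne_zero hp0m hp0nn hp1nn hμ1pos)
  have hS : MeasurableSet {x | δ ≤ L x} := measurableSet_le measurable_const (hp1m.div hp0m).log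
  set q := volume.withDensity (fun x => ENNReal.ofReal (p0 x)) {x | δ ≤ L x}
  obtain ⟨m, hm⟩ := exists_nat_gt (c / δ)
  have hm0 : 0 < m := by exact_mod_cast (div_pos hc hδ).trans hm
  have hcm : c ≤ m * δ := ((div_lt_iff₀ hδ).1 hm).le
  have h_alarm (K : ℕ) :
      1 - (1 - q ^ m) ^ K ≤ P (K * m + 1) {ω | 1 ≤ τ ω ∧ τ ω < K * m + 1} := by
    have hθ : 1 ≤ K * m + 1 := by omega
    rw [← measure_iUnion_block_preimage_eq hXm (hindep _ hθ) hS fun i hi => by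
      rw [← Measure.map_apply (hXm i) hS, hlaw0 _ hθ i (mem_Ioc.1 hi).1 (by grind)]]
    refine measure_mono (Set.iUnion₂_subset fun j hj ω hω => ?_)
    have hcross : c ≤ M (j * m + m) ω :=
      le_cusum_of_forall_mem_Ioc_le (Z := fun i => L (X i ω)) (hM1 ω) (fun n hn => hMrec n hn ω)
        hm0 hcm fun i hi => Set.mem_iInter₂.1 hω i hi
    have hmem : j * m + m ∈ {n | 1 ≤ n ∧ c ≤ M n ω} := ⟨by omega, hcross⟩
    rw [Set.mem_ofPred_eq, hτ ω]
    exact ⟨(Nat.sInf_mem ⟨_, hmem⟩).1,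
      (Nat.sInf_le hmem).trans_lt (by nlinarith [mem_range.1 hj])⟩
  refine le_antisymm (iSup₂_le fun θ hθ => ?_) ?_
  · have := (hindep θ hθ).isProbabilityMeasure
    exact prob_le_one
  refine le_of_tendsto' (tendsto_one_sub_pow_atTop_nhds_one
    (ENNReal.sub_lt_self ENNReal.one_ne_top one_ne_zero (pow_ne_zero m hq))) fun K => ?_
  exact (h_alarm K).trans (le_iSup₂ (f := fun θ (_ : 1 ≤ θ) => P θ {ω | 1 ≤ τ ω ∧ τ ω < θ})
    (K * m + 1) (by omega))

/-- The CUSUM stopping time `τ_ml^α` does not control the false alarm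
probability uniformly in the change point: `sup_{θ ≥ 1} P_θ(τ_ml^α < θ) = 1`. -/
theorem statement3
    {Ω : Type*} [MeasurableSpace Ω]
    {d : ℕ} (p0 p1 : (Fin d → ℝ) → ℝ)
    (hp0m : Measurable p0) (hp1m : Measurable p1)
    (hp0nn : ∀ x, 0 ≤ p0 x) (hp1nn : ∀ x, 0 ≤ p1 x)
    (hp0int : ∫ x, p0 x = 1) (hp1int : ∫ x, p1 x = 1)
    (hμ0int : Integrable (fun x => Real.log (p0 x / p1 x) * p0 x))
    (hμ0pos : 0 < ∫ x, Real.log (p0 x / p1 x) * p0 x)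
    (hμ1int : Integrable (fun x => Real.log (p1 x / p0 x) * p1 x))
    (hμ1pos : 0 < ∫ x, Real.log (p1 x / p0 x) * p1 x)
    (X : ℕ → Ω → (Fin d → ℝ)) (hXm : ∀ i, Measurable (X i))
    (P : ℕ → Measure Ω) (hP : ∀ θ, 1 ≤ θ → IsProbabilityMeasure (P θ))
    (hindep : ∀ θ, 1 ≤ θ → iIndepFun X (P θ))
    (hlaw0 : ∀ θ, 1 ≤ θ → ∀ i, 1 ≤ i → i < θ →
      (P θ).map (X i) = volume.withDensity (fun x => ENNReal.ofReal (p0 x)))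
    (hlaw1 : ∀ θ, 1 ≤ θ → ∀ i, θ ≤ i →
      (P θ).map (X i) = volume.withDensity (fun x => ENNReal.ofReal (p1 x)))
    (α : ℝ) (hα : α ∈ Set.Ioo (0 : ℝ) 1)
    (M : ℕ → Ω → ℝ)
    (hM1 : ∀ ω, M 1 ω = Real.log (p1 (X 1 ω) / p0 (X 1 ω)))
    (hMrec : ∀ n, 2 ≤ n → ∀ ω,
      M n ω = Real.log (p1 (X n ω) / p0 (X n ω)) + max 0 (M (n - 1) ω))
    (τ : Ω → ℕ)
    (hτ : ∀ ω, τ ω = sInf {n | 1 ≤ n ∧ Real.log (1 / α) ≤ M n ω}) :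
    (⨆ θ : ℕ, ⨆ _ : 1 ≤ θ, P θ {ω | 1 ≤ τ ω ∧ τ ω < θ}) = 1 :=
  statement3_general p0 p1 hp0m hp1m hp0nn hp1nn hμ1pos X hXm P hindep hlaw0 α hα M hM1 hMrec τ hτ
end

section
/- For any ε ∈ (0,1), any integer m ≥ 1, and any x > −log(1 − 0.2075/2), if e_1, e_2, ... are i.i.d. standard exponential random variables then P( max_{k ∈ ℤ^+} [e_k − b_{m,ε}(k)] ≥ x ) ≤ 1 − exp{ −e^{−x} ( ε^{−1} + e^{−x} ) }. -/
open MeasureTheory ProbabilityTheory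

/-- The iterated logarithm functions: `Phi 0 x = x`, `Phi (m+1) x = 1 + log (Phi m x)`,
so that `Phi 1 x = φ(x) = 1 + log x` and `Phi m = φ(Phi (m−1))`. -/
noncomputable def Phi : ℕ → ℝ → ℝ
  | 0, x => x
  | m + 1, x => 1 + Real.log (Phi m x)

/-- The boundary `b_{m,ε}(x) = −log [1/(ε Φ_m(x)^ε) − 1/(ε Φ_m(x+1)^ε)]`. -/
noncomputable def bfun (m : ℕ) (ε : ℝ) (x : ℝ) : ℝ :=
  -Real.log (1 / (ε * Phi m x ^ ε) - 1 / (ε * Phi m (x + 1) ^ ε))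

/-!
Write `d k = e^{-b_{m,ε}(k)}` and `r = e^{-x}`. The event in question is the complement of
`⋂ k, {e k < x + b(k)}`, whose probability is `∏ (1 - r d k)` by independence. Since
`1 - p ≥ e^{-(p + p²)}` for `p ≤ 1/2`, it suffices to show `∑ d k ≤ 1/ε`, a telescoping
sum, and `∑ (d k)² ≤ 1`. For the latter, `d k` is at most the increment of
`log Φ_m = Φ_{m+1} - 1` over `[k, k + 1]`; these increments decrease with `m`, so
`d k ≤ Φ_2(k+1) - Φ_2(k)`, which is `log (1 + log 2)` at `k = 1` and at most `0.6 / k` for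
`k ≥ 2`.
-/

open Real Finset

lemma one_le_Phi : ∀ (m : ℕ) {x : ℝ}, 1 ≤ x → 1 ≤ Phi m x
  | 0, _, hx => hx
  | m + 1, _, hx => le_add_of_nonneg_right (log_nonneg (one_le_Phi m hx))

lemma strictMonoOn_Phi : ∀ m : ℕ, StrictMonoOn (Phi m) (Set.Ici 1)
  | 0 => strictMonoOn_id
  | m + 1 => fun _ hx _ hy hxy =>
    add_lt_add_right (log_lt_log (zero_lt_one.trans_le (one_le_Phi m hx))
      (strictMonoOn_Phi m hx hy hxy)) 1

lemma Phi_one : ∀ m : ℕ, Phi m 1 = 1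
  | 0 => rfl
  | m + 1 => by simp [Phi, Phi_one m]

lemma Phi_succ_sub_Phi_succ_le (m : ℕ) {x y : ℝ} (hx : 1 ≤ x) (hxy : x ≤ y) :
    Phi (m + 1) y - Phi (m + 1) x ≤ (Phi m y - Phi m x) / Phi m x := by
  have hpx : 0 < Phi m x := zero_lt_one.trans_le (one_le_Phi m hx)
  have hpy : 0 < Phi m y := zero_lt_one.trans_le (one_le_Phi m (hx.trans hxy))
  calc Phi (m + 1) y - Phi (m + 1) x = log (Phi m y / Phi m x) := by
        rw [log_div hpy.ne' hpx.ne']; simp only [Phi]; ring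
    _ ≤ Phi m y / Phi m x - 1 := log_le_sub_one_of_pos (div_pos hpy hpx)
    _ = (Phi m y - Phi m x) / Phi m x := by field_simp

lemma antitone_Phi_sub_Phi {x y : ℝ} (hx : 1 ≤ x) (hxy : x ≤ y) :
    Antitone fun m => Phi m y - Phi m x :=
  antitone_nat_of_succ_le fun m => (Phi_succ_sub_Phi_succ_le m hx hxy).trans <|
    div_le_self (sub_nonneg.2 ((strictMonoOn_Phi m).monotoneOn hx (hx.trans hxy) hxy))
      (one_le_Phi m hx)

lemma one_div_mul_rpow_sub_pos {ε a b : ℝ} (hε : 0 < ε) (ha : 0 < a) (hab : a < b) :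
    0 < 1 / (ε * a ^ ε) - 1 / (ε * b ^ ε) :=
  sub_pos.2 <| one_div_lt_one_div_of_lt (by positivity) <|
    mul_lt_mul_of_pos_left (rpow_lt_rpow ha.le hab hε) hε

/-- With `s = log a`, this says that `s ↦ e^{-ε s} / ε` is `1`-Lipschitz on `[0, ∞)`. -/
lemma one_div_mul_rpow_sub_le_log_sub {ε a b : ℝ} (hε : 0 < ε) (ha : 1 ≤ a) (hab : a ≤ b) :
    1 / (ε * a ^ ε) - 1 / (ε * b ^ ε) ≤ log b - log a := by
  have ha0 : 0 < a := zero_lt_one.trans_le ha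
  set δ := log b - log a
  have hb : b ^ ε = a ^ ε * exp (ε * δ) := by
    rw [rpow_def_of_pos ha0, rpow_def_of_pos (ha0.trans_le hab), ← exp_add]; congr 1; ring
  have ha1 : 1 ≤ a ^ ε := one_le_rpow ha hε.le
  have hδ : 1 - exp (-(ε * δ)) ≤ ε * δ := by linarith [add_one_le_exp (-(ε * δ))]
  calc 1 / (ε * a ^ ε) - 1 / (ε * b ^ ε) = (1 - exp (-(ε * δ))) / (ε * a ^ ε) := by
        rw [hb, exp_neg]; field_simp
    _ ≤ ε * δ / (ε * a ^ ε) := by gcongr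
    _ ≤ ε * δ / ε := by
        gcongr
        · exact mul_nonneg hε.le (sub_nonneg.2 (log_le_log ha0 hab))
        · exact le_mul_of_one_le_right hε.le ha1
    _ = δ := by field_simp

lemma exp_neg_bfun {m : ℕ} {ε t : ℝ} (hε : 0 < ε) (ht : 1 ≤ t) :
    exp (-bfun m ε t) = 1 / (ε * Phi m t ^ ε) - 1 / (ε * Phi m (t + 1) ^ ε) := by
  rw [bfun, neg_neg, exp_log (one_div_mul_rpow_sub_pos hε
    (zero_lt_one.trans_le (one_le_Phi m ht)) (strictMonoOn_Phi m ht (by simp; linarith)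
      (lt_add_one t)))]

lemma exp_neg_bfun_le_Phi_two_sub {m : ℕ} (hm : 1 ≤ m) {ε t : ℝ} (hε : 0 < ε)
    (ht : 1 ≤ t) :
    exp (-bfun m ε t) ≤ Phi 2 (t + 1) - Phi 2 t := by
  have hmono := (strictMonoOn_Phi m).monotoneOn ht (show 1 ≤ t + 1 by linarith) (by linarith)
  calc exp (-bfun m ε t) ≤ log (Phi m (t + 1)) - log (Phi m t) := by
        rw [exp_neg_bfun hε ht]
        exact one_div_mul_rpow_sub_le_log_sub hε (one_le_Phi m ht) hmono
    _ = Phi (m + 1) (t + 1) - Phi (m + 1) t := by simp only [Phi]; ring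
    _ ≤ Phi 2 (t + 1) - Phi 2 t := antitone_Phi_sub_Phi ht (by linarith) (by omega)

lemma log_le_sub_inv_div_two {y : ℝ} (hy : 1 ≤ y) : log y ≤ (y - y⁻¹) / 2 := by
  rw [← sinh_log (zero_lt_one.trans_le hy)]
  exact self_le_sinh_iff.2 (log_nonneg hy)

lemma exp_neg_add_sq_le_one_sub {q : ℝ} (hq0 : 0 ≤ q) (hq : q ≤ 1 / 2) :
    exp (-(q + q ^ 2)) ≤ 1 - q := by
  have hpos : 0 < 1 - q := by linarith
  have hlog := log_le_sub_inv_div_two (one_le_inv_iff₀.2 ⟨hpos, by linarith⟩)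
  rw [log_inv, inv_inv] at hlog
  have key : ((1 - q)⁻¹ - (1 - q)) / 2 ≤ q + q ^ 2 := by
    rw [div_le_iff₀ two_pos, sub_le_iff_le_add, inv_le_iff_one_le_mul₀ hpos]
    nlinarith
  calc exp (-(q + q ^ 2)) ≤ exp (log (1 - q)) := exp_le_exp.2 (by linarith)
    _ = 1 - q := exp_log hpos

lemma exp_neg_bfun_one_le {m : ℕ} (hm : 1 ≤ m) {ε : ℝ} (hε : 0 < ε) :
    exp (-bfun m ε 1) ≤ 0.552 := by
  have hPhi : Phi 2 (1 + 1) - Phi 2 1 = log (1 + log 2) := by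
    rw [Phi_one]; norm_num [Phi]
  have h2 := log_two_lt_d9
  have h2' := log_two_gt_d9
  have hinv : (0.59 : ℝ) ≤ (1 + log 2)⁻¹ := by
    rw [le_inv_comm₀ (by norm_num) (by linarith)]; linarith
  calc exp (-bfun m ε 1) ≤ log (1 + log 2) := hPhi ▸ exp_neg_bfun_le_Phi_two_sub hm hε le_rfl
    _ ≤ ((1 + log 2) - (1 + log 2)⁻¹) / 2 := log_le_sub_inv_div_two (by linarith)
    _ ≤ 0.552 := by linarith

lemma exp_neg_bfun_le_of_two_le {m : ℕ} (hm : 1 ≤ m) {ε t : ℝ} (hε : 0 < ε)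
    (ht : 2 ≤ t) :
    exp (-bfun m ε t) ≤ 0.6 / t := by
  have ht0 : 0 < t := by linarith
  have hlog : log (t + 1) - log t ≤ 1 / t := by
    rw [← log_div (by linarith) ht0.ne']
    calc log ((t + 1) / t) ≤ (t + 1) / t - 1 := log_le_sub_one_of_pos (by positivity)
      _ = 1 / t := by field_simp; ring
  have hPhi1 : 1.69 ≤ Phi 1 t := by
    have := log_le_log two_pos ht
    have := log_two_gt_d9
    simp only [Phi]; linarith
  calc exp (-bfun m ε t) ≤ Phi 2 (t + 1) - Phi 2 t :=
        exp_neg_bfun_le_Phi_two_sub hm hε (by linarith)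
    _ ≤ (Phi 1 (t + 1) - Phi 1 t) / Phi 1 t :=
        Phi_succ_sub_Phi_succ_le 1 (by linarith) (by linarith)
    _ ≤ (1 / t) / 1.69 :=
        div_le_div₀ (by positivity) (by simpa only [Phi, add_sub_add_left_eq_sub] using hlog)
          (by norm_num) hPhi1
    _ ≤ 0.6 / t := by rw [div_div, div_le_div_iff₀ (by positivity) ht0]; linarith

/-- `0.552 ≥ log (1 + log 2)`; it is this bound that makes `e^{-x} e^{-b(k)} ≤ 1/2` under the
hypothesis on `x` of the main theorem. -/
lemma exp_neg_bfun_pnat_le {m : ℕ} (hm : 1 ≤ m) {ε : ℝ} (hε : 0 < ε) (k : ℕ+) :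
    exp (-bfun m ε ((k : ℕ) : ℝ)) ≤ min (0.552 : ℝ) (0.6 / (k : ℕ)) := by
  rcases (Nat.succ_le_of_lt k.pos).eq_or_lt with hk | hk
  · rw [← hk, Nat.cast_one]
    have := exp_neg_bfun_one_le hm hε
    exact le_min this (by linarith)
  · have hk2 : (2 : ℝ) ≤ (k : ℕ) := by exact_mod_cast hk
    have := exp_neg_bfun_le_of_two_le hm hε hk2
    refine le_min (this.trans ?_) this
    rw [div_le_iff₀ (by linarith)]; linarith

lemma sum_range_exp_neg_bfun_le {m : ℕ} {ε : ℝ} (hε : 0 < ε) (n : ℕ) :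
    ∑ i ∈ range n, exp (-bfun m ε ((i : ℝ) + 1)) ≤ ε⁻¹ := by
  set g : ℕ → ℝ := fun i => 1 / (ε * Phi m ((i : ℝ) + 1) ^ ε)
  have htel : ∀ i ∈ range n, exp (-bfun m ε ((i : ℝ) + 1)) = g i - g (i + 1) := fun i _ => by
    rw [exp_neg_bfun hε (by simp)]; simp only [g, Nat.cast_add, Nat.cast_one]
  have hgn : 0 ≤ g n := by
    have := one_le_Phi m (show (1 : ℝ) ≤ n + 1 by simp)
    positivity
  rw [sum_congr rfl htel, sum_range_sub']
  simp only [g, CharP.cast_eq_zero, zero_add, Phi_one, one_rpow, mul_one, one_div] at hgn ⊢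
  linarith

lemma sum_natPred_le_of_sum_range_le {u : ℕ → ℝ} {c : ℝ} (hu : ∀ n, 0 ≤ u n)
    (h : ∀ n, ∑ i ∈ range n, u i ≤ c) (s : Finset ℕ+) :
    ∑ k ∈ s, u k.natPred ≤ c := by
  rw [← sum_image fun _ _ _ _ hkl => PNat.natPred_injective hkl]
  exact ((summable_of_sum_range_le hu h).sum_le_tsum _ fun i _ => hu i).trans
    (Real.tsum_le_of_sum_range_le hu h)

lemma sum_exp_neg_bfun_le {m : ℕ} {ε : ℝ} (hε : 0 < ε) (s : Finset ℕ+) :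
    ∑ k ∈ s, exp (-bfun m ε ((k : ℕ) : ℝ)) ≤ ε⁻¹ := by
  have hk : ∀ k : ℕ+, ((k : ℕ) : ℝ) = (k.natPred : ℝ) + 1 := fun k => by
    exact_mod_cast (PNat.natPred_add_one k).symm
  simp only [hk]
  exact sum_natPred_le_of_sum_range_le (fun _ => (exp_pos _).le)
    (sum_range_exp_neg_bfun_le hε) s

lemma sum_one_div_sq_pnat_le (s : Finset ℕ+) :
    ∑ k ∈ s, 1 / ((k : ℕ) : ℝ) ^ 2 ≤ π ^ 2 / 6 := by
  rw [← sum_image (f := fun n : ℕ => 1 / (n : ℝ) ^ 2)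
    fun _ _ _ _ hkl => PNat.coe_injective hkl]
  exact sum_le_hasSum _ (fun _ _ => by positivity) hasSum_zeta_two

lemma sum_exp_neg_bfun_sq_le {m : ℕ} (hm : 1 ≤ m) {ε : ℝ} (hε : 0 < ε) (s : Finset ℕ+) :
    ∑ k ∈ s, exp (-bfun m ε ((k : ℕ) : ℝ)) ^ 2 ≤ 1 := by
  have hterm : ∀ k ∈ s,
      exp (-bfun m ε ((k : ℕ) : ℝ)) ^ 2 ≤ 0.36 * (1 / ((k : ℕ) : ℝ) ^ 2) :=
    fun k _ => by
      have h := (exp_neg_bfun_pnat_le hm hε k).trans (min_le_right _ _)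
      calc exp (-bfun m ε ((k : ℕ) : ℝ)) ^ 2 ≤ (0.6 / (k : ℕ)) ^ 2 :=
            pow_le_pow_left₀ (exp_pos _).le h 2
        _ = 0.36 * (1 / ((k : ℕ) : ℝ) ^ 2) := by ring
  calc ∑ k ∈ s, exp (-bfun m ε ((k : ℕ) : ℝ)) ^ 2
      ≤ 0.36 * ∑ k ∈ s, 1 / ((k : ℕ) : ℝ) ^ 2 := by rw [mul_sum]; exact sum_le_sum hterm
    _ ≤ 0.36 * (π ^ 2 / 6) := by gcongr; exact sum_one_div_sq_pnat_le s
    _ ≤ 1 := by nlinarith [pi_le_four, pi_pos]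

lemma sum_exp_neg_bfun_add_sq_le {m : ℕ} (hm : 1 ≤ m) {ε r : ℝ} (hε : 0 < ε) (hr : 0 ≤ r)
    (s : Finset ℕ+) :
    ∑ k ∈ s,
        (r * exp (-bfun m ε ((k : ℕ) : ℝ)) + (r * exp (-bfun m ε ((k : ℕ) : ℝ))) ^ 2)
      ≤ r * (ε⁻¹ + r) := by
  have h1 := mul_le_mul_of_nonneg_left (sum_exp_neg_bfun_le (m := m) hε s) hr
  have h2 := mul_le_mul_of_nonneg_left (sum_exp_neg_bfun_sq_le hm hε s) (sq_nonneg r)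
  simp only [sum_add_distrib, mul_pow, ← mul_sum]
  linarith

lemma ofReal_exp_neg_le_measure_iInter {Ω ι : Type*} [MeasurableSpace Ω] [Countable ι]
    {μ : Measure Ω} [IsProbabilityMeasure μ] {B : ι → Set Ω}
    (hB : ∀ i, MeasurableSet (B i)) (hindep : iIndepSet B μ) {q : ι → ℝ}
    (hq : ∀ i, μ (B i)ᶜ = ENNReal.ofReal (q i))
    (hq0 : ∀ i, 0 ≤ q i) (hq1 : ∀ i, q i ≤ 1 / 2) {c : ℝ}
    (hc : ∀ s : Finset ι, ∑ i ∈ s, (q i + q i ^ 2) ≤ c) :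
    ENNReal.ofReal (exp (-c)) ≤ μ (⋂ i, B i) := by
  have hB' : ∀ i, μ (B i) = ENNReal.ofReal (1 - q i) := fun i => by
    rw [← compl_compl (B i), prob_compl_eq_one_sub (hB i).compl, hq,
      ENNReal.ofReal_sub _ (hq0 i), ENNReal.ofReal_one]
  have hfinite : ∀ s : Finset ι, ENNReal.ofReal (exp (-c)) ≤ μ (⋂ i ∈ s, B i) := fun s =>
    calc ENNReal.ofReal (exp (-c)) ≤ ENNReal.ofReal (∏ i ∈ s, exp (-(q i + q i ^ 2))) := by
          rw [← exp_sum, sum_neg_distrib]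
          exact ENNReal.ofReal_le_ofReal (exp_le_exp.2 (neg_le_neg (hc s)))
      _ = ∏ i ∈ s, ENNReal.ofReal (exp (-(q i + q i ^ 2))) :=
          ENNReal.ofReal_prod_of_nonneg fun _ _ => (exp_pos _).le
      _ ≤ ∏ i ∈ s, μ (B i) := prod_le_prod' fun i _ => by
          rw [hB']; exact ENNReal.ofReal_le_ofReal (exp_neg_add_sq_le_one_sub (hq0 i) (hq1 i))
      _ = μ (⋂ i ∈ s, B i) := (hindep.meas_biInter s).symm
  rw [Set.iInter_eq_iInter_finset,
    Directed.measure_iInter (s := fun s : Finset ι => ⋂ i ∈ s, B i)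
    (fun s => (s.measurableSet_biInter fun i _ => hB i).nullMeasurableSet)
    (Antitone.directed_ge fun _ _ hst => Set.biInter_subset_biInter_left (coe_subset.2 hst))
    ⟨∅, measure_ne_top _ _⟩]
  exact le_iInf hfinite

theorem statement9_general
    {Ω : Type*} [MeasurableSpace Ω] (P : Measure Ω) [IsProbabilityMeasure P]
    (e : ℕ+ → Ω → ℝ) (hem : ∀ k, Measurable (e k))
    (hindep : iIndepFun e P)
    (hexp : ∀ k, ∀ s : ℝ, 0 ≤ s → P {ω | s ≤ e k ω} = ENNReal.ofReal (Real.exp (-s)))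
    (ε : ℝ) (hε0 : 0 < ε)
    (m : ℕ) (hm : 1 ≤ m)
    (x : ℝ) (hx : -Real.log (1 - 0.2075 / 2) < x) :
    P {ω | ∃ k : ℕ+, x ≤ e k ω - bfun m ε ((k : ℕ) : ℝ)}
      ≤ ENNReal.ofReal (1 - Real.exp (-(Real.exp (-x) * (ε⁻¹ + Real.exp (-x))))) := by
  set r := exp (-x)
  have hr : r < 1 - 0.2075 / 2 := by
    rw [← exp_log (by norm_num : (0 : ℝ) < 1 - 0.2075 / 2)]; exact exp_lt_exp.2 (by linarith)
  set d : ℕ+ → ℝ := fun k => exp (-bfun m ε ((k : ℕ) : ℝ))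
  have hq0 : ∀ k, 0 ≤ r * d k := fun k => by positivity
  have hq1 : ∀ k, r * d k ≤ 1 / 2 := fun k => by
    have := (exp_neg_bfun_pnat_le hm hε0 k).trans (min_le_left _ _)
    nlinarith [exp_pos (-x), exp_pos (-bfun m ε ((k : ℕ) : ℝ))]
  set B : ℕ+ → Set Ω := fun k => e k ⁻¹' Set.Iio (x + bfun m ε ((k : ℕ) : ℝ))
  have hB : ∀ k, MeasurableSet (B k) := fun k => hem k measurableSet_Iio
  have hBc : ∀ k, P (B k)ᶜ = ENNReal.ofReal (r * d k) := fun k => by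
    have hexp_eq : exp (-(x + bfun m ε ((k : ℕ) : ℝ))) = r * d k := by rw [neg_add, exp_add]
    have hnonneg : 0 ≤ x + bfun m ε ((k : ℕ) : ℝ) :=
      neg_nonpos.1 (exp_le_one_iff.1 (by linarith [hexp_eq ▸ hq1 k]))
    rw [← hexp_eq, ← hexp k _ hnonneg, ← Set.preimage_compl, Set.compl_Iio]; rfl
  have hBindep : iIndepSet B P := (iIndepSet_iff_meas_biInter hB).2 fun s =>
    hindep.meas_biInter fun k _ => ⟨_, measurableSet_Iio, rfl⟩
  have hevent :
      {ω | ∃ k : ℕ+, x ≤ e k ω - bfun m ε ((k : ℕ) : ℝ)} = (⋂ k, B k)ᶜ := by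
    ext ω; simp [B, le_sub_iff_add_le]
  rw [hevent, prob_compl_eq_one_sub (MeasurableSet.iInter hB),
    ENNReal.ofReal_sub _ (exp_pos _).le, ENNReal.ofReal_one]
  exact tsub_le_tsub_left
    (ofReal_exp_neg_le_measure_iInter hB hBindep hBc hq0 hq1
      (sum_exp_neg_bfun_add_sq_le hm hε0 (exp_pos (-x)).le)) 1

/-- Lemma A.1 of the paper: for i.i.d. standard exponentials `e k`,
for any `ε ∈ (0,1)`, `m ≥ 1` and `x > −log (1 − 0.2075/2)`,
`P(max_{k ≥ 1} [e k − b_{m,ε}(k)] ≥ x) ≤ 1 − exp (−e^{−x} (ε⁻¹ + e^{−x}))`. -/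
theorem statement9
    {Ω : Type*} [MeasurableSpace Ω] (P : Measure Ω) [IsProbabilityMeasure P]
    (e : ℕ+ → Ω → ℝ) (hem : ∀ k, Measurable (e k))
    (hindep : iIndepFun e P)
    (hexp : ∀ k, ∀ s : ℝ, 0 ≤ s → P {ω | s ≤ e k ω} = ENNReal.ofReal (Real.exp (-s)))
    (ε : ℝ) (hε0 : 0 < ε) (hε1 : ε < 1)
    (m : ℕ) (hm : 1 ≤ m)
    (x : ℝ) (hx : -Real.log (1 - 0.2075 / 2) < x) :
    P {ω | ∃ k : ℕ+, x ≤ e k ω - bfun m ε ((k : ℕ) : ℝ)}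
      ≤ ENNReal.ofReal (1 - Real.exp (-(Real.exp (-x) * (ε⁻¹ + Real.exp (-x))))) :=
  statement9_general P e hem hindep hexp ε hε0 m hm x hx
end

section
/- For every real θ > 1, lim_{j → ∞} j · log(Φ_j(θ)) = 2. -/
open Filter Topology

/-!
The sequence `u j = log Φ_j(θ)` satisfies `u (j + 1) = log (1 + u j)`, so it decreases to the
unique fixed point `0` of `t ↦ log (1 + t)`. Since `log (1 + t) = t - t² / 2 + O(t³)`, the
increments `1 / u (j + 1) - 1 / u j` tend to `1 / 2`; by Cesàro, `1 / (j u j) → 1 / 2`.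
-/

namespace Real

lemma log_one_add_lt_self {x : ℝ} (hx₁ : -1 < x) (hx₀ : x ≠ 0) : log (1 + x) < x := by
  have := log_lt_sub_one_of_pos (by linarith : 0 < 1 + x) (by simpa using hx₀)
  linarith

lemma tendsto_log_one_add_div_self :
    Tendsto (fun t : ℝ => log (1 + t) / t) (𝓝[≠] 0) (𝓝 1) := by
  have := (hasDerivAt_log one_ne_zero).tendsto_slope_zero
  simp only [inv_one, log_one, sub_zero, smul_eq_mul] at this
  exact this.congr fun t => inv_mul_eq_div t _

lemma tendsto_sub_log_one_add_div_sq :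
    Tendsto (fun t : ℝ => (t - log (1 + t)) / t ^ 2) (𝓝[≠] 0) (𝓝 (1 / 2)) := by
  rw [tendsto_iff_norm_sub_tendsto_zero]
  refine squeeze_zero' (Eventually.of_forall fun t => norm_nonneg _) ?_
    ((continuous_const.mul continuous_abs).tendsto' 0 0 (by simp) |>.mono_left nhdsWithin_le_nhds :
      Tendsto (fun t : ℝ => 2 * |t|) _ _)
  filter_upwards [self_mem_nhdsWithin,
    nhdsWithin_le_nhds (Metric.ball_mem_nhds (0 : ℝ) one_half_pos)]
    with t (ht : t ≠ 0) (hball : dist t 0 < 1 / 2)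
  rw [Real.dist_eq, sub_zero] at hball
  have htaylor := abs_log_sub_add_sum_range_le (x := -t) (by rw [abs_neg]; linarith) 2
  simp only [Finset.sum_range_succ, Finset.sum_range_zero, abs_neg, sub_neg_eq_add] at htaylor
  have ht2 : 0 < t ^ 2 := by positivity
  have hat : 0 < |t| := abs_pos.mpr ht
  rw [Real.norm_eq_abs, show (t - log (1 + t)) / t ^ 2 - 1 / 2
      = -((-t + t ^ 2 / 2 + log (1 + t)) / t ^ 2) by field_simp; ring,
    abs_neg, abs_div, abs_of_pos ht2, div_le_iff₀ ht2]
  calc |-t + t ^ 2 / 2 + log (1 + t)| ≤ |t| ^ 3 / (1 - |t|) := by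
        convert htaylor using 3; push_cast; ring
    _ ≤ 2 * |t| * t ^ 2 := by
        rw [div_le_iff₀ (by linarith), ← sq_abs t]; nlinarith [pow_pos hat 3]

lemma tendsto_inv_log_one_add_sub_inv :
    Tendsto (fun t : ℝ => (log (1 + t))⁻¹ - t⁻¹) (𝓝[≠] 0) (𝓝 (1 / 2)) := by
  have h := tendsto_sub_log_one_add_div_sq.div tendsto_log_one_add_div_self one_ne_zero
  rw [div_one] at h
  refine h.congr' ?_
  filter_upwards [self_mem_nhdsWithin,
    nhdsWithin_le_nhds (Ioi_mem_nhds (by norm_num : (-1 : ℝ) < 0))]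
    with t (ht : t ≠ 0) (ht₁ : -1 < t)
  have hlog : log (1 + t) ≠ 0 :=
    log_ne_zero_of_pos_of_ne_one (by linarith) (by simpa using ht)
  simp only [Pi.div_apply]
  field_simp

end Real

open Real

theorem tendsto_div_natCast_of_tendsto_sub {v : ℕ → ℝ} {c : ℝ}
    (h : Tendsto (fun n => v (n + 1) - v n) atTop (𝓝 c)) :
    Tendsto (fun n : ℕ => v n / n) atTop (𝓝 c) := by
  have hmean : Tendsto (fun n : ℕ => (n : ℝ)⁻¹ * (v n - v 0)) atTop (𝓝 c) :=
    h.cesaro.congr fun n => by rw [Finset.sum_range_sub]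
  have hinit : Tendsto (fun n : ℕ => (n : ℝ)⁻¹ * v 0) atTop (𝓝 0) := by
    simpa using tendsto_inv_atTop_nhds_zero_nat.mul_const (v 0)
  simpa [div_eq_inv_mul, mul_sub] using hmean.add hinit

lemma pos_of_succ_eq_log_one_add {u : ℕ → ℝ} (hu₀ : 0 < u 0)
    (hu : ∀ n, u (n + 1) = log (1 + u n)) (n : ℕ) : 0 < u n := by
  induction n with
  | zero => exact hu₀
  | succ n ih => rw [hu]; exact log_pos (by linarith)

lemma tendsto_zero_of_succ_eq_log_one_add {u : ℕ → ℝ} (hu₀ : 0 < u 0)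
    (hu : ∀ n, u (n + 1) = log (1 + u n)) : Tendsto u atTop (𝓝[>] 0) := by
  have hpos := pos_of_succ_eq_log_one_add hu₀ hu
  have hanti : StrictAnti u := strictAnti_nat_of_succ_lt fun n =>
    hu n ▸ log_one_add_lt_self (by linarith [hpos n]) (hpos n).ne'
  have hlim : Tendsto u atTop (𝓝 (⨅ n, u n)) :=
    tendsto_atTop_ciInf hanti.antitone ⟨0, by rintro _ ⟨n, rfl⟩; exact (hpos n).le⟩
  set L := ⨅ n, u n
  have hL₀ : 0 ≤ L := le_ciInf fun n => (hpos n).le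
  have hfix : log (1 + L) = L := by
    refine tendsto_nhds_unique ?_ (hlim.comp (tendsto_add_atTop_nat 1))
    refine (((continuousAt_log (by linarith)).tendsto).comp (tendsto_const_nhds.add hlim)).congr ?_
    exact fun n => (hu n).symm
  have hL : L = 0 := by
    by_contra hne
    exact (log_one_add_lt_self (by linarith) hne).ne hfix
  exact tendsto_nhdsWithin_of_tendsto_nhds_of_eventually_within u (hL ▸ hlim)
    (Eventually.of_forall hpos)

theorem tendsto_natCast_mul_of_succ_eq_log_one_add {u : ℕ → ℝ} (hu₀ : 0 < u 0)
    (hu : ∀ n, u (n + 1) = log (1 + u n)) :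
    Tendsto (fun n : ℕ => (n : ℝ) * u n) atTop (𝓝 2) := by
  have hdiff : Tendsto (fun n => (u (n + 1))⁻¹ - (u n)⁻¹) atTop (𝓝 (1 / 2)) :=
    (tendsto_inv_log_one_add_sub_inv.comp
      ((tendsto_zero_of_succ_eq_log_one_add hu₀ hu).mono_right (nhdsGT_le_nhdsNE 0))).congr
      fun n => by simp only [Function.comp_apply, hu]
  simpa using
    (tendsto_div_natCast_of_tendsto_sub (v := fun n => (u n)⁻¹) hdiff).inv₀ (by norm_num)

/-- For every real `θ > 1`, `lim_{j → ∞} j · log (Φ_j(θ)) = 2`. -/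
theorem statement15 (θ : ℝ) (hθ : 1 < θ) :
    Tendsto (fun j : ℕ => (j : ℝ) * Real.log (Phi j θ)) atTop (𝓝 2) :=
  tendsto_natCast_mul_of_succ_eq_log_one_add (log_pos hθ) fun j => by simp [Phi]
end
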